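/- arXiv:0801.0086 — 2 statements merged into one kernel-verified Lean document; each statement's English description precedes it below -/
import Mathlib

section
/- Every vertex [v] of Γ_E(R) is either an associated prime or adjacent to a vertex [z] where ann(z) is a maximal element of the family F = {ann(x) : 0 ≠ x ∈ R}. -/
open scoped Classical

noncomputable section

/-- The annihilator ideal of an element `x` of a commutative ring `R`. -/
def ann (R : Type*) [CommRing R] (x : R) : Ideal R := Ideal.torsionOf R R x

/-- The type of nonzero zero divisors of `R`. -/
def ZD (R : Type*) [CommRing R] : Type _ :=
  {x : R // x ≠ 0 ∧ ∃ y : R, y ≠ 0 ∧ x * y = 0}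

/-- Two zero divisors are equivalent iff they have the same annihilator. -/
instance annSetoid (R : Type*) [CommRing R] : Setoid (ZD R) :=
  ⟨fun a b => ann R a.1 = ann R b.1,
   fun _ => rfl, Eq.symm, Eq.trans⟩

/-- The vertex set of `Γ_E(R)`: equivalence classes of nonzero zero divisors. -/
def GammaEV (R : Type*) [CommRing R] : Type _ := Quotient (annSetoid R)

/-- The class of a nonzero zero divisor. -/
def cls (R : Type*) [CommRing R] (a : ZD R) : GammaEV R :=
  Quotient.mk (annSetoid R) a

/-- The graph `Γ_E(R)` of equivalence classes of zero divisors. -/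
def gammaE (R : Type*) [CommRing R] : SimpleGraph (GammaEV R) where
  Adj u v := u ≠ v ∧ ∃ a b : ZD R, cls R a = u ∧ cls R b = v ∧ a.1 * b.1 = 0
  symm := ⟨by
    rintro u v ⟨huv, a, b, ha, hb, hab⟩
    exact ⟨huv.symm, b, a, hb, ha, by rwa [mul_comm] at hab⟩⟩
  loopless := ⟨by rintro u ⟨h, -⟩; exact h rfl⟩

/-- `I` is a maximal element of the family `F = {ann x : 0 ≠ x ∈ R}`. -/
def MaxAnn (R : Type*) [CommRing R] (I : Ideal R) : Prop :=
  (∃ x : R, x ≠ 0 ∧ I = ann R x) ∧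
    ∀ y : R, y ≠ 0 → I ≤ ann R y → I = ann R y

/-!
Choose `y ≠ 0` with `v * y = 0`. Since `R` is Noetherian, `ann y` lies below a maximal member
`ann z` of `F`, and then `v ∈ ann y ≤ ann z`, so `v * z = 0`. Either `ann v = ann z`, which is
maximal in `F` and hence prime, or `[v] ≠ [z]` and the two classes are adjacent.
-/

lemma mem_ann {R : Type*} [CommRing R] {x r : R} : r ∈ ann R x ↔ r * x = 0 := by
  rw [ann, Ideal.mem_torsionOf_iff, smul_eq_mul]

lemma ann_le_ann_mul {R : Type*} [CommRing R] (b x : R) : ann R x ≤ ann R (b * x) := by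
  intro r hr
  rw [mem_ann] at hr ⊢
  rw [mul_left_comm, hr, mul_zero]

lemma MaxAnn.isPrime {R : Type*} [CommRing R] {I : Ideal R} (h : MaxAnn R I) : I.IsPrime := by
  obtain ⟨⟨x, hx, rfl⟩, hmax⟩ := h
  refine ⟨fun htop => hx ?_, fun {a b} hab => or_iff_not_imp_right.mpr fun hb => ?_⟩
  · simpa [mem_ann] using htop.ge (Submodule.mem_top (x := (1 : R)))
  · have hbx : b * x ≠ 0 := fun h => hb (mem_ann.mpr h)
    rw [hmax _ hbx (ann_le_ann_mul b x), mem_ann, ← mul_assoc]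
    exact mem_ann.mp hab

lemma exists_maxAnn_ge {R : Type*} [CommRing R] [IsNoetherianRing R] {y : R} (hy : y ≠ 0) :
    ∃ z : R, z ≠ 0 ∧ ann R y ≤ ann R z ∧ MaxAnn R (ann R z) := by
  obtain ⟨_, ⟨z, hz, hyz, rfl⟩, hmax⟩ := set_has_maximal_iff_noetherian.mpr ‹_›
    {I | ∃ x : R, x ≠ 0 ∧ ann R y ≤ ann R x ∧ I = ann R x} ⟨ann R y, y, hy, le_rfl, rfl⟩
  refine ⟨z, hz, hyz, ⟨z, hz, rfl⟩, fun w hw hle => ?_⟩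
  exact hle.eq_of_not_lt (hmax _ ⟨w, hw, hyz.trans hle, rfl⟩)

lemma gammaE_adj_of_mul_eq_zero {R : Type*} [CommRing R] {a b : ZD R}
    (hne : ann R a.1 ≠ ann R b.1) (hab : a.1 * b.1 = 0) : (gammaE R).Adj (cls R a) (cls R b) :=
  ⟨fun h => hne (Quotient.exact h), a, b, rfl, rfl, hab⟩

theorem stmt2 (R : Type*) [CommRing R] [IsNoetherianRing R] (v : ZD R) :
    (ann R v.1).IsPrime ∨
      ∃ z : ZD R, MaxAnn R (ann R z.1) ∧ (gammaE R).Adj (cls R v) (cls R z) := by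
  obtain ⟨hv, y, hy, hvy⟩ := v.2
  obtain ⟨z, hz, hyz, hmax⟩ := exists_maxAnn_ge hy
  have hvz : v.1 * z = 0 := mem_ann.mp (hyz (mem_ann.mpr hvy))
  by_cases heq : ann R v.1 = ann R z
  · exact .inl (heq ▸ hmax.isPrime)
  · let z' : ZD R := ⟨z, hz, v.1, hv, by rw [mul_comm, hvz]⟩
    exact .inr ⟨z', hmax, gammaE_adj_of_mul_eq_zero heq hvz⟩
end
end

section
/- If x and y are zero divisors of R with 0 ≠ ann(x) ⊊ ann(y), then deg[x] ≤ deg[y] in Γ_E(R). -/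
open scoped Classical

noncomputable section

/- The swap of `u` and `v` maps the neighbours of `u` injectively into those of `v`: it sends `v`
(if adjacent to `u`) to `u`, and fixes every other neighbour of `u`. -/
theorem SimpleGraph.encard_neighborSet_le_of_adj_imp {V : Type*} (G : SimpleGraph V) {u v : V}
    (hadj : ∀ w, G.Adj u w → w ≠ v → G.Adj v w) :
    (G.neighborSet u).encard ≤ (G.neighborSet v).encard := by
  refine Set.encard_le_encard_of_injOn (f := Equiv.swap u v) ?_
    (Equiv.swap u v).injective.injOn
  intro w huw
  rcases eq_or_ne w v with rfl | hwv
  · simpa using huw.symm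
  · rw [Equiv.swap_apply_of_ne_of_ne (G.ne_of_adj huw).symm hwv]
    exact hadj w huw hwv

theorem mem_ann_iff {R : Type*} [CommRing R] {x y : R} : y ∈ ann R x ↔ y * x = 0 :=
  Ideal.mem_torsionOf_iff x y

theorem gammaE_adj_of_ann_le {R : Type*} [CommRing R] {a b : ZD R}
    (hab : ann R a.1 ≤ ann R b.1) (w : GammaEV R) (haw : (gammaE R).Adj (cls R a) w)
    (hwb : w ≠ cls R b) : (gammaE R).Adj (cls R b) w := by
  obtain ⟨-, p, q, hp, rfl, hpq⟩ := haw
  have hqa : q.1 ∈ ann R a.1 := by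
    rw [← (Quotient.exact hp : ann R p.1 = ann R a.1), mem_ann_iff, mul_comm]
    exact hpq
  have hbq : b.1 * q.1 = 0 := by
    rw [mul_comm, ← mem_ann_iff]
    exact hab hqa
  exact ⟨hwb.symm, b, q, rfl, rfl, hbq⟩

theorem stmt9_general (R : Type*) [CommRing R] (a b : ZD R)
    (h : ann R a.1 < ann R b.1) :
    ((gammaE R).neighborSet (cls R a)).encard ≤
      ((gammaE R).neighborSet (cls R b)).encard :=
  (gammaE R).encard_neighborSet_le_of_adj_imp (gammaE_adj_of_ann_le h.le)

theorem stmt9 (R : Type*) [CommRing R] [IsNoetherianRing R] (a b : ZD R)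
    (h0 : ann R a.1 ≠ ⊥) (h : ann R a.1 < ann R b.1) :
    ((gammaE R).neighborSet (cls R a)).encard ≤
      ((gammaE R).neighborSet (cls R b)).encard :=
  stmt9_general R a b h
end
end
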